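/- Let W denote an irreducible T-module. Then dim(E^ε_i W) ≤ 1 for 0 ≤ i ≤ D. -/

import Mathlib

/-!
The Kronecker power `P` intertwines the three operators cyclically: `P A = A* P`, `P Aᵉ = A P`,
and, because `P³` is scalar, `P A* = Aᵉ P`. Conjugating `[A, A*] = 2i Aᵉ` by `P` therefore gives
the other two relations of a copy of `sl₂` in which `Aᵉ` is the Cartan element and `(A* ∓ iA)/2`
are the raising and lowering operators. An irreducible `T`-module is irreducible for this `sl₂`, so
it is spanned by the lowering chain of a highest-weight vector, whose members are eigenvectors of
`Aᵉ` with pairwise distinct eigenvalues. Finally `Eᵉ_i = P⁻¹ E_i P` is the polynomial in `Aᵉ`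
vanishing at every eigenvalue `θ_j` with `j ≠ i`, so it kills all members of the chain but one.
-/

noncomputable section

open Matrix Finset

/-- Vertex set of the hypercube `Q_D`: binary strings of length `D`. -/
abbrev Vtx (D : ℕ) := Fin D → Bool

/-- Hamming weight of a vertex, i.e. its distance to the fixed vertex `x = (0,...,0)`. -/
def wt {D : ℕ} (y : Vtx D) : ℕ := (Finset.univ.filter fun k => y k = true).card

/-- The adjacency matrix of the hypercube `Q_D`: `A_{yz} = 1` iff `y,z` differ in exactly
one coordinate. -/
def adjMat (D : ℕ) : Matrix (Vtx D) (Vtx D) ℂ :=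
  fun y z => if (Finset.univ.filter fun k => y k ≠ z k).card = 1 then 1 else 0

/-- The dual adjacency matrix of `Q_D` with respect to `x = (0,...,0)`: the diagonal
matrix with `(y,y)`-entry `D - 2·wt(y)`. -/
def dualAdjMat (D : ℕ) : Matrix (Vtx D) (Vtx D) ℂ :=
  Matrix.diagonal fun y => (D : ℂ) - 2 * (wt y : ℂ)

/-- The imaginary adjacency matrix `Aᵉ = -i(AA* - A*A)/2`. -/
def imagAdjMat (D : ℕ) : Matrix (Vtx D) (Vtx D) ℂ :=
  (-Complex.I / 2) • (adjMat D * dualAdjMat D - dualAdjMat D * adjMat D)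

/-- The 2×2 matrix `P₁` with entries `(P₁)₀₀ = 1`, `(P₁)₀₁ = 1`, `(P₁)₁₀ = -i`,
`(P₁)₁₁ = i`. -/
def P1 : Bool → Bool → ℂ
  | false, false => 1
  | false, true  => 1
  | true,  false => -Complex.I
  | true,  true  => Complex.I

/-- The D-fold Kronecker power `P = P₁^{⊗D}`, i.e. `P_{yz} = ∏_k (P₁)_{y_k z_k}`. -/
def Pmat (D : ℕ) : Matrix (Vtx D) (Vtx D) ℂ :=
  fun y z => ∏ k : Fin D, P1 (y k) (z k)

/-- The eigenvalues `θ_j = D - 2j`. -/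
def theta (D j : ℕ) : ℂ := (D : ℂ) - 2 * (j : ℂ)

/-- The `i`-th primitive idempotent `E_i = ∏_{0 ≤ j ≤ D, j ≠ i} (A - θ_j I)/(θ_i - θ_j)`. -/
def Emat (D i : ℕ) : Matrix (Vtx D) (Vtx D) ℂ :=
  Polynomial.aeval (adjMat D)
    (∏ j ∈ (Finset.range (D + 1)).erase i,
      Polynomial.C ((theta D i - theta D j)⁻¹) * (Polynomial.X - Polynomial.C (theta D j)))

/-- The `i`-th dual idempotent `E*_i`: diagonal with `(y,y)`-entry `1` if `wt(y) = i`. -/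
def EstarMat (D i : ℕ) : Matrix (Vtx D) (Vtx D) ℂ :=
  Matrix.diagonal fun y => if wt y = i then 1 else 0

/-- The `i`-th imaginary idempotent `Eᵉ_i = P⁻¹ E_i P`. -/
def EepsMat (D i : ℕ) : Matrix (Vtx D) (Vtx D) ℂ :=
  (Pmat D)⁻¹ * Emat D i * Pmat D

/-- `W` is a `T`-module: a subspace of `ℂ^X` invariant under `A` and `A*`. -/
def IsTMod (D : ℕ) (W : Submodule ℂ (Vtx D → ℂ)) : Prop :=
  (∀ w ∈ W, (adjMat D).mulVec w ∈ W) ∧ (∀ w ∈ W, (dualAdjMat D).mulVec w ∈ W)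

/-- `W` is an irreducible `T`-module. -/
def IsIrredTMod (D : ℕ) (W : Submodule ℂ (Vtx D → ℂ)) : Prop :=
  IsTMod D W ∧ W ≠ ⊥ ∧
    ∀ U : Submodule ℂ (Vtx D → ℂ), IsTMod D U → U ≤ W → U = ⊥ ∨ U = W

/-- The Hermitian inner product `⟨u,v⟩ = uᵗ · conj v` (linear in the first argument). -/
def inp {D : ℕ} (u v : Vtx D → ℂ) : ℂ := ∑ y, u y * (starRingEnd ℂ) (v y)

open Polynomial

theorem SemiconjBy.aeval {R A : Type*} [CommSemiring R] [Semiring A] [Algebra R A] {a x y : A}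
    (h : SemiconjBy a x y) (p : R[X]) : SemiconjBy a (aeval x p) (aeval y p) := by
  induction p using Polynomial.induction_on' with
  | add p q hp hq => simpa only [map_add] using hp.add_right hq
  | monomial n r =>
    simpa only [aeval_monomial] using
      SemiconjBy.mul_right (Algebra.commute_algebraMap_right r a) (h.pow_right n)

/-- If conjugation by `P` cycles `a ↦ b ↦ c` and `P ^ 3` commutes with `a`, it sends `c ↦ a`. -/
theorem SemiconjBy.of_pow_three {M : Type*} [Monoid M] {P a b c : M} (hP : IsUnit P)
    (h3 : Commute (P ^ 3) a) (hab : SemiconjBy P a b) (hbc : SemiconjBy P b c) :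
    SemiconjBy P c a := by
  refine (hP.pow 2).mul_right_cancel ?_
  calc P * c * P ^ 2 = P * (P * b) * P := by rw [hbc.eq]; simp only [pow_two, mul_assoc]
    _ = P * P * (P * a) := by rw [hab.eq]; simp only [mul_assoc]
    _ = P ^ 3 * a := by simp only [pow_succ, pow_zero, one_mul, mul_assoc]
    _ = a * P * P ^ 2 := by rw [h3.eq, mul_assoc, ← pow_succ']

theorem lie_eq_smul_of_semiconjBy {R A : Type*} [CommRing R] [Ring A] [Algebra R A]
    {P x y z x' y' z' : A} (hP : IsUnit P) (hx : SemiconjBy P x x') (hy : SemiconjBy P y y')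
    (hz : SemiconjBy P z z') {t : R} (h : ⁅x', y'⁆ = t • z') : ⁅x, y⁆ = t • z := by
  refine hP.mul_left_cancel ?_
  have hxy : SemiconjBy P ⁅x, y⁆ ⁅x', y'⁆ := by
    simpa only [Ring.lie_def] using (hx.mul_right hy).sub_right (hy.mul_right hx)
  rw [hxy.eq, h, (hz.smul_right t).eq]

section ComplexLie

open Complex

variable {L : Type*} [LieRing L] [LieAlgebra ℂ L] {a b c : L}

/- Relations `⁅a, b⁆ = 2i c`, `⁅b, c⁆ = 2i a`, `⁅c, a⁆ = 2i b` present `sl₂(ℂ)` with Cartan element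
`a` and raising and lowering operators `(c - i b) / 2` and `(c + i b) / 2`. -/

theorem lie_raise_of_lie_eq (hab : ⁅a, b⁆ = (2 * I) • c) (hca : ⁅c, a⁆ = (2 * I) • b) :
    ⁅a, (2⁻¹ : ℂ) • (c - I • b)⁆ = (2 : ℂ) • (2⁻¹ : ℂ) • (c - I • b) := by
  have hac : ⁅a, c⁆ = -((2 * I) • b) := by rw [← lie_skew, hca]
  simp only [lie_smul, lie_sub, hab, hac]
  match_scalars <;> grind [I_sq]

theorem lie_lower_of_lie_eq (hab : ⁅a, b⁆ = (2 * I) • c) (hca : ⁅c, a⁆ = (2 * I) • b) :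
    ⁅a, (2⁻¹ : ℂ) • (c + I • b)⁆ = (-2 : ℂ) • (2⁻¹ : ℂ) • (c + I • b) := by
  have hac : ⁅a, c⁆ = -((2 * I) • b) := by rw [← lie_skew, hca]
  simp only [lie_smul, lie_add, hab, hac]
  match_scalars <;> grind [I_sq]

theorem lie_raise_lower_of_lie_eq (hbc : ⁅b, c⁆ = (2 * I) • a) :
    ⁅(2⁻¹ : ℂ) • (c - I • b), (2⁻¹ : ℂ) • (c + I • b)⁆ = a := by
  have hcb : ⁅c, b⁆ = -((2 * I) • a) := by rw [← lie_skew, hbc]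
  simp only [lie_smul, smul_lie, lie_add, sub_lie, lie_self, hbc, hcb]
  match_scalars
  grind [I_sq]

end ComplexLie

namespace Module.End

variable {K V : Type*} [Field K] [AddCommGroup V] [Module K V] {h e f : Module.End K V}

theorem apply_apply_of_lie_eq_smul {x : Module.End K V} {t : K} (hx : ⁅h, x⁆ = t • x) (w : V) :
    h (x w) = x (h w) + t • x w := by
  rw [← LinearMap.smul_apply, ← hx, Ring.lie_def, LinearMap.sub_apply, mul_apply, mul_apply,
    add_sub_cancel]

theorem apply_pow_apply_of_lie_eq_smul {x : Module.End K V} {t μ : K} (hx : ⁅h, x⁆ = t • x)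
    {v : V} (hv : h v = μ • v) (n : ℕ) : h ((x ^ n) v) = (μ + n * t) • (x ^ n) v := by
  induction n with
  | zero => simpa using hv
  | succ n ih =>
    rw [pow_succ', mul_apply, apply_apply_of_lie_eq_smul hx, ih, map_smul, ← add_smul]
    congr 1
    push_cast
    ring

theorem apply_pow_succ_apply_of_lie_eq (hf : ⁅h, f⁆ = (-2 : K) • f) (hef : ⁅e, f⁆ = h) {v : V}
    {μ : K} (hv : h v = μ • v) (hev : e v = 0) (n : ℕ) :
    e ((f ^ (n + 1)) v) = ((n + 1) * (μ - n)) • (f ^ n) v := by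
  have hcomm (w : V) : e (f w) = f (e w) + h w := by
    rw [← hef, Ring.lie_def, LinearMap.sub_apply, mul_apply, mul_apply, add_sub_cancel]
  induction n with
  | zero => simp [hcomm, hev, hv]
  | succ n ih =>
    rw [pow_succ', mul_apply, hcomm, ih, map_smul, ← mul_apply, ← pow_succ',
      apply_pow_apply_of_lie_eq_smul hf hv, ← add_smul]
    congr 1
    push_cast
    ring

variable [IsAlgClosed K] [CharZero K] [FiniteDimensional K V]

theorem exists_primitive_mem (he : ⁅h, e⁆ = (2 : K) • e) {W : Submodule K V} (hW : W ≠ ⊥)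
    (hhW : ∀ v ∈ W, h v ∈ W) (heW : ∀ v ∈ W, e v ∈ W) :
    ∃ v ∈ W, v ≠ 0 ∧ ∃ μ : K, h v = μ • v ∧ e v = 0 := by
  have := Submodule.nontrivial_iff_ne_bot.mpr hW
  obtain ⟨μ, hμ⟩ := exists_eigenvalue (h.restrict hhW)
  obtain ⟨u, hu⟩ := hμ.exists_hasEigenvector
  have hu_eig : h u = μ • (u : V) := congr_arg Subtype.val hu.apply_eq_smul
  have hu_ne : (u : V) ≠ 0 := by simpa using hu.2
  -- The vectors `e ^ k u` are eigenvectors of `h` for the distinct eigenvalues `μ + 2 k`,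
  -- and `h` has only finitely many eigenvalues.
  have h_vanish : ∃ k, (e ^ k) u = 0 := by
    by_contra! hne
    have hsub : Set.range (fun k : ℕ => μ + k * 2) ⊆ {c | h.HasEigenvalue c} := by
      rintro _ ⟨k, rfl⟩
      exact hasEigenvalue_of_hasEigenvector
        ⟨mem_eigenspace_iff.mpr (apply_pow_apply_of_lie_eq_smul he hu_eig k), hne k⟩
    refine Set.infinite_range_of_injective (fun k l hkl => ?_)
      (h.finite_hasEigenvalue.subset hsub)
    simpa using hkl
  obtain ⟨n, hn, hn_succ⟩ :=
    Nat.exists_not_and_succ_of_not_zero_of_exists (by simpa using hu_ne) h_vanish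
  refine ⟨(e ^ n) u, pow_apply_mem_of_forall_mem n heW _ u.2, hn, μ + n * 2,
    apply_pow_apply_of_lie_eq_smul he hu_eig n, ?_⟩
  rwa [pow_succ', mul_apply] at hn_succ

theorem exists_eq_span_range_eigenvectors (he : ⁅h, e⁆ = (2 : K) • e)
    (hf : ⁅h, f⁆ = (-2 : K) • f) (hef : ⁅e, f⁆ = h) {W : Submodule K V} (hW : W ≠ ⊥)
    (heW : ∀ v ∈ W, e v ∈ W) (hfW : ∀ v ∈ W, f v ∈ W)
    (hirr : ∀ U ≤ W, (∀ u ∈ U, e u ∈ U) → (∀ u ∈ U, f u ∈ U) → U = ⊥ ∨ U = W) :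
    ∃ (μ : K) (ψ : ℕ → V),
      (∀ n, h (ψ n) = (μ - 2 * n) • ψ n) ∧ W = Submodule.span K (Set.range ψ) := by
  have hhW (v : V) (hv : v ∈ W) : h v ∈ W := by
    rw [← hef, Ring.lie_def, LinearMap.sub_apply, mul_apply, mul_apply]
    exact W.sub_mem (heW _ (hfW v hv)) (hfW _ (heW v hv))
  obtain ⟨v, hvW, hv_ne, μ, hv, hev⟩ := exists_primitive_mem he hW hhW heW
  set U := Submodule.span K (Set.range fun n => (f ^ n) v)
  have hfU : U ≤ U.comap f := Submodule.span_le.mpr <| by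
    rintro _ ⟨n, rfl⟩
    rw [SetLike.mem_coe, Submodule.mem_comap, ← mul_apply, ← pow_succ']
    exact Submodule.subset_span ⟨n + 1, rfl⟩
  have heU : U ≤ U.comap e := Submodule.span_le.mpr <| by
    rintro _ ⟨_ | n, rfl⟩
    · simp [hev]
    · rw [SetLike.mem_coe, Submodule.mem_comap, apply_pow_succ_apply_of_lie_eq hf hef hv hev]
      exact U.smul_mem _ (Submodule.subset_span ⟨n, rfl⟩)
  have hUW : U ≤ W := Submodule.span_le.mpr <| by
    rintro _ ⟨n, rfl⟩
    exact pow_apply_mem_of_forall_mem n hfW v hvW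
  have hU_ne : U ≠ ⊥ := (Submodule.ne_bot_iff U).mpr ⟨v, Submodule.subset_span ⟨0, by simp⟩, hv_ne⟩
  have hUW_eq : U = W := (hirr U hUW (fun _ hu => heU hu) (fun _ hu => hfU hu)).resolve_left hU_ne
  refine ⟨μ, fun n => (f ^ n) v, fun n => ?_, hUW_eq.symm⟩
  rw [apply_pow_apply_of_lie_eq_smul hf hv]
  congr 1
  ring

end Module.End

theorem Matrix.aeval_diagonal {n R : Type*} [Fintype n] [DecidableEq n] [CommSemiring R]
    (d : n → R) (p : R[X]) : aeval (diagonal d) p = diagonal fun k => p.eval (d k) := by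
  have := aeval_algHom_apply (diagonalAlgHom R : (n → R) →ₐ[R] Matrix n n R) d p
  simpa [aeval_pi_apply] using this

theorem Matrix.aeval_mulVec_of_mulVec_eq_smul {n R : Type*} [Fintype n] [DecidableEq n]
    [CommRing R] {M : Matrix n n R} {v : n → R} {μ : R} (hv : M *ᵥ v = μ • v) (p : R[X]) :
    aeval M p *ᵥ v = p.eval μ • v := by
  rw [← toLinAlgEquiv'_apply, ← aeval_algHom_apply]
  exact Module.End.aeval_apply_of_mem_apply_eq_smul (by rwa [toLinAlgEquiv'_apply])

theorem Matrix.toLinAlgEquiv'_lie {n R : Type*} [Fintype n] [DecidableEq n] [CommRing R]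
    (M N : Matrix n n R) : toLinAlgEquiv' ⁅M, N⁆ = ⁅toLinAlgEquiv' M, toLinAlgEquiv' N⁆ := by
  simp only [Ring.lie_def, map_sub, map_mul]

theorem finrank_span_range_le_one {K V ι : Type*} [DivisionRing K] [AddCommGroup V] [Module K V]
    {u : ι → V} (hu : ∀ m n, u m ≠ 0 → u n ≠ 0 → m = n) :
    Module.finrank K (Submodule.span K (Set.range u)) ≤ 1 := by
  by_cases h : ∃ m, u m ≠ 0
  · obtain ⟨m, hm⟩ := h
    have hle : Submodule.span K (Set.range u) ≤ K ∙ u m := Submodule.span_le.mpr <| by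
      rintro _ ⟨n, rfl⟩
      by_cases hn : u n = 0
      · simp [hn]
      · rw [hu m n hm hn]; exact Submodule.mem_span_singleton_self _
    exact (Submodule.finrank_mono hle).trans (finrank_span_singleton hm).le
  · have hbot : Submodule.span K (Set.range u) = ⊥ := by
      simpa [Submodule.span_eq_bot] using h
    rw [hbot, finrank_bot]
    exact zero_le_one

def Matrix.kronPowHom (ι : Type*) {α R : Type*} [Fintype ι] [DecidableEq ι] [Fintype α]
    [DecidableEq α] [CommSemiring R] : Matrix α α R →* Matrix (ι → α) (ι → α) R where
  toFun M := of fun y z => ∏ k, M (y k) (z k)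
  map_one' := by
    ext y z
    simp [one_apply, Finset.prod_boole, funext_iff]
  map_mul' M N := by
    ext y z
    simp only [of_apply, mul_apply, ← Finset.prod_mul_distrib]
    exact Fintype.prod_sum fun k b => M (y k) b * N b (z k)

theorem Matrix.kronPowHom_smul {ι α R : Type*} [Fintype ι] [DecidableEq ι] [Fintype α]
    [DecidableEq α] [CommSemiring R] (c : R) (M : Matrix α α R) :
    kronPowHom ι (c • M) = c ^ Fintype.card ι • kronPowHom ι M := by
  ext y z
  simp [kronPowHom, Finset.prod_mul_distrib]

theorem of_P1_pow_three : of P1 ^ 3 = (2 - 2 * Complex.I) • 1 := by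
  ext a b
  cases a <;> cases b <;> norm_num [pow_succ, mul_apply, P1, Complex.ext_iff]

theorem Pmat_pow_three (D : ℕ) : Pmat D ^ 3 = (2 - 2 * Complex.I) ^ D • 1 := by
  rw [show Pmat D = kronPowHom (Fin D) (of P1) from rfl, ← map_pow, of_P1_pow_three,
    kronPowHom_smul, map_one, Fintype.card_fin]

theorem isUnit_Pmat (D : ℕ) : IsUnit (Pmat D) := by
  have hc : (2 - 2 * Complex.I) ^ D ≠ 0 :=
    pow_ne_zero _ fun h => by simpa using congr_arg Complex.re h
  rw [← isUnit_pow_iff (n := 3) (by norm_num), Pmat_pow_three, ← Algebra.algebraMap_eq_smul_one]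
  exact (isUnit_iff_ne_zero.mpr hc).map _

section Hypercube

variable {D : ℕ}

def flipAt (j : Fin D) (z : Vtx D) : Vtx D := Function.update z j (!z j)

def boolSign (b : Bool) : ℂ := if b then -1 else 1

theorem hammingDist_eq_one_iff_exists_flipAt (w z : Vtx D) :
    hammingDist w z = 1 ↔ ∃ j, w = flipAt j z := by
  constructor
  · intro h
    obtain ⟨j, hj⟩ := Finset.card_eq_one.mp h
    have hdiff (k : Fin D) : w k ≠ z k ↔ k = j := by
      simpa using Finset.ext_iff.mp hj k
    refine ⟨j, funext fun k => ?_⟩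
    by_cases hk : k = j
    · subst hk
      simpa [flipAt, Bool.eq_not_iff] using hdiff k
    · simpa [flipAt, hk] using (hdiff k).not.mpr hk
  · rintro ⟨j, rfl⟩
    refine Finset.card_eq_one.mpr ⟨j, Finset.ext fun k => ?_⟩
    by_cases hk : k = j <;> simp [flipAt, Function.update_apply, hk]

theorem flipAt_left_injective (z : Vtx D) : Function.Injective fun j => flipAt j z := by
  intro j k hjk
  by_contra hne
  have := congr_fun hjk j
  simp [flipAt, hne] at this

theorem mul_adjMat_apply (M : Matrix (Vtx D) (Vtx D) ℂ) (y z : Vtx D) :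
    (M * adjMat D) y z = ∑ j, M y (flipAt j z) := by
  have hnbr : Finset.univ.filter (fun w : Vtx D => hammingDist w z = 1) =
      Finset.univ.image fun j => flipAt j z := by
    ext w
    simp only [Finset.mem_filter, Finset.mem_univ, true_and, Finset.mem_image,
      hammingDist_eq_one_iff_exists_flipAt]
    exact exists_congr fun _ => eq_comm
  rw [mul_apply, ← Finset.sum_image fun j _ k _ h => flipAt_left_injective z h, ← hnbr,
    Finset.sum_filter]
  exact Finset.sum_congr rfl fun w _ => by simp [adjMat, hammingDist]

theorem adjMat_mul_apply (M : Matrix (Vtx D) (Vtx D) ℂ) (y z : Vtx D) :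
    (adjMat D * M) y z = ∑ j, M (flipAt j y) z := by
  have hsymm : (adjMat D)ᵀ = adjMat D := by
    ext y z
    exact congr_arg (fun d => if d = 1 then (1 : ℂ) else 0) (hammingDist_comm z y)
  rw [← transpose_apply (adjMat D * M), transpose_mul, hsymm, mul_adjMat_apply]
  rfl

theorem dualEig_eq_sum_boolSign (y : Vtx D) : (D : ℂ) - 2 * wt y = ∑ j, boolSign (y j) := by
  have h (b : Bool) : boolSign b = 1 - 2 * if b = true then 1 else 0 := by
    cases b <;> norm_num [boolSign]
  simp only [h, Finset.sum_sub_distrib, ← Finset.mul_sum, Finset.sum_boole, wt]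
  simp

theorem dualEig_sub_dualEig_flipAt (z : Vtx D) (j : Fin D) :
    ((D : ℂ) - 2 * wt z) - ((D : ℂ) - 2 * wt (flipAt j z)) = 2 * boolSign (z j) := by
  have hsplit (b : Bool) : ∑ k, boolSign (Function.update z j b k) =
      boolSign b + ∑ k ∈ Finset.univ \ {j}, boolSign (z k) := by
    simp only [Function.apply_update (fun _ => boolSign)]
    exact Finset.sum_update_of_mem (Finset.mem_univ j) _ _
  have hz := hsplit (z j)
  rw [Function.update_eq_self] at hz
  rw [dualEig_eq_sum_boolSign, dualEig_eq_sum_boolSign, flipAt, hsplit, hz]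
  cases z j <;> norm_num [boolSign]

theorem Pmat_update (y z : Vtx D) (j : Fin D) (a b : Bool) :
    Pmat D (Function.update y j a) (Function.update z j b) =
      P1 a b * ∏ k ∈ Finset.univ.erase j, P1 (y k) (z k) := by
  rw [Pmat, ← Finset.mul_prod_erase _ _ (Finset.mem_univ j), Function.update_self,
    Function.update_self]
  congr 1
  exact Finset.prod_congr rfl fun k hk => by
    simp [Function.update_of_ne (Finset.ne_of_mem_erase hk)]

theorem Pmat_flipAt_right (y z : Vtx D) (j : Fin D) :
    Pmat D y (flipAt j z) = boolSign (y j) * Pmat D y z := by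
  have hflip := Pmat_update y z j (y j) (!z j)
  have hyz := Pmat_update y z j (y j) (z j)
  simp only [Function.update_eq_self] at hflip hyz
  rw [flipAt, hflip, hyz, ← mul_assoc]
  congr 1
  cases y j <;> cases z j <;> simp [P1, boolSign]

theorem Pmat_flipAt_left (y z : Vtx D) (j : Fin D) :
    Pmat D (flipAt j y) z = -Complex.I * boolSign (z j) * Pmat D y (flipAt j z) := by
  have hleft := Pmat_update y z j (!y j) (z j)
  have hright := Pmat_update y z j (y j) (!z j)
  simp only [Function.update_eq_self] at hleft hright
  rw [flipAt, flipAt, hleft, hright, ← mul_assoc]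
  congr 1
  cases y j <;> cases z j <;> simp [P1, boolSign]

end Hypercube

section Intertwining

variable (D : ℕ)

theorem semiconjBy_Pmat_adjMat : SemiconjBy (Pmat D) (adjMat D) (dualAdjMat D) := by
  ext y z
  rw [mul_adjMat_apply, dualAdjMat, diagonal_mul, dualEig_eq_sum_boolSign, Finset.sum_mul]
  simp only [Pmat_flipAt_right]

theorem semiconjBy_Pmat_imagAdjMat : SemiconjBy (Pmat D) (imagAdjMat D) (adjMat D) := by
  ext y z
  simp only [imagAdjMat, Matrix.mul_smul, Matrix.mul_sub, ← Matrix.mul_assoc,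
    Matrix.smul_apply, Matrix.sub_apply, dualAdjMat, mul_diagonal, mul_adjMat_apply,
    adjMat_mul_apply, smul_eq_mul, Finset.sum_mul, ← Finset.sum_sub_distrib, Finset.mul_sum]
  refine Finset.sum_congr rfl fun j _ => ?_
  rw [← mul_sub, dualEig_sub_dualEig_flipAt, Pmat_flipAt_left]
  ring

theorem semiconjBy_Pmat_dualAdjMat : SemiconjBy (Pmat D) (dualAdjMat D) (imagAdjMat D) := by
  refine (semiconjBy_Pmat_imagAdjMat D).of_pow_three (isUnit_Pmat D) ?_ (semiconjBy_Pmat_adjMat D)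
  rw [Pmat_pow_three]
  exact (Commute.one_left _).smul_left _

theorem lie_adjMat_dualAdjMat : ⁅adjMat D, dualAdjMat D⁆ = (2 * Complex.I) • imagAdjMat D := by
  have h : 2 * Complex.I * (-Complex.I / 2) = 1 := by linear_combination -Complex.I_sq
  rw [imagAdjMat, smul_smul, h, one_smul, Ring.lie_def]

theorem lie_imagAdjMat_adjMat : ⁅imagAdjMat D, adjMat D⁆ = (2 * Complex.I) • dualAdjMat D :=
  lie_eq_smul_of_semiconjBy (isUnit_Pmat D) (semiconjBy_Pmat_imagAdjMat D)
    (semiconjBy_Pmat_adjMat D) (semiconjBy_Pmat_dualAdjMat D) (lie_adjMat_dualAdjMat D)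

theorem lie_dualAdjMat_imagAdjMat : ⁅dualAdjMat D, imagAdjMat D⁆ = (2 * Complex.I) • adjMat D :=
  lie_eq_smul_of_semiconjBy (isUnit_Pmat D) (semiconjBy_Pmat_dualAdjMat D)
    (semiconjBy_Pmat_imagAdjMat D) (semiconjBy_Pmat_adjMat D) (lie_imagAdjMat_adjMat D)

end Intertwining

section Spectrum

variable (D : ℕ)

def annPoly : ℂ[X] := ∏ j ∈ Finset.range (D + 1), (X - C (theta D j))

def idemPoly (i : ℕ) : ℂ[X] :=
  ∏ j ∈ (Finset.range (D + 1)).erase i, C ((theta D i - theta D j)⁻¹) * (X - C (theta D j))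

theorem aeval_dualAdjMat_annPoly : aeval (dualAdjMat D) (annPoly D) = 0 := by
  rw [dualAdjMat, aeval_diagonal, diagonal_eq_zero]
  funext y
  have hwt : wt y ∈ Finset.range (D + 1) :=
    Finset.mem_range_succ_iff.mpr ((Finset.card_filter_le _ _).trans_eq (Finset.card_fin D))
  rw [annPoly, eval_prod]
  exact Finset.prod_eq_zero hwt (by simp [theta])

theorem aeval_imagAdjMat_annPoly : aeval (imagAdjMat D) (annPoly D) = 0 := by
  have h := ((semiconjBy_Pmat_dualAdjMat D).aeval (annPoly D)).eq
  rwa [aeval_dualAdjMat_annPoly, mul_zero, eq_comm, (isUnit_Pmat D).mul_left_eq_zero] at h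

theorem EepsMat_eq_aeval (i : ℕ) : EepsMat D i = aeval (imagAdjMat D) (idemPoly D i) := by
  rw [EepsMat, Emat, mul_assoc, ← ((semiconjBy_Pmat_imagAdjMat D).aeval _).eq,
    nonsing_inv_mul_cancel_left _ _ ((isUnit_iff_isUnit_det _).mp (isUnit_Pmat D))]
  rfl

variable {D}

theorem eval_annPoly_eq_zero_of_mulVec_eq_smul {v : Vtx D → ℂ} {μ : ℂ}
    (hv : imagAdjMat D *ᵥ v = μ • v) (hv_ne : v ≠ 0) : (annPoly D).eval μ = 0 := by
  have h := aeval_mulVec_of_mulVec_eq_smul hv (annPoly D)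
  rw [aeval_imagAdjMat_annPoly, zero_mulVec, eq_comm, smul_eq_zero] at h
  exact h.resolve_right hv_ne

theorem eq_theta_of_eval_idemPoly_ne_zero {i : ℕ} {x : ℂ} (hx : (annPoly D).eval x = 0)
    (hi : (idemPoly D i).eval x ≠ 0) : x = theta D i := by
  obtain ⟨j, hj, hxj⟩ := Finset.prod_eq_zero_iff.mp (by rwa [annPoly, eval_prod] at hx)
  simp only [eval_sub, eval_X, eval_C, sub_eq_zero] at hxj
  obtain rfl | hji := eq_or_ne j i
  · exact hxj
  · refine absurd ?_ hi
    rw [idemPoly, eval_prod]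
    exact Finset.prod_eq_zero (Finset.mem_erase.mpr ⟨hji, hj⟩) (by simp [hxj])

end Spectrum

section Sl2

attribute [local instance] LieRing.ofAssociativeRing

variable (D : ℕ)

def raiseMat : Matrix (Vtx D) (Vtx D) ℂ := (2⁻¹ : ℂ) • (dualAdjMat D - Complex.I • adjMat D)

def lowerMat : Matrix (Vtx D) (Vtx D) ℂ := (2⁻¹ : ℂ) • (dualAdjMat D + Complex.I • adjMat D)

theorem lie_imagAdjMat_raiseMat : ⁅imagAdjMat D, raiseMat D⁆ = (2 : ℂ) • raiseMat D :=
  lie_raise_of_lie_eq (lie_imagAdjMat_adjMat D) (lie_dualAdjMat_imagAdjMat D)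

theorem lie_imagAdjMat_lowerMat : ⁅imagAdjMat D, lowerMat D⁆ = (-2 : ℂ) • lowerMat D :=
  lie_lower_of_lie_eq (lie_imagAdjMat_adjMat D) (lie_dualAdjMat_imagAdjMat D)

theorem lie_raiseMat_lowerMat : ⁅raiseMat D, lowerMat D⁆ = imagAdjMat D :=
  lie_raise_lower_of_lie_eq (lie_adjMat_dualAdjMat D)

end Sl2

theorem isTMod_iff {D : ℕ} {U : Submodule ℂ (Vtx D → ℂ)} :
    IsTMod D U ↔ (∀ u ∈ U, raiseMat D *ᵥ u ∈ U) ∧ (∀ u ∈ U, lowerMat D *ᵥ u ∈ U) := by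
  have hA : adjMat D = Complex.I • (raiseMat D - lowerMat D) := by
    simp only [raiseMat, lowerMat]
    match_scalars <;> grind [Complex.I_sq]
  have hAs : dualAdjMat D = raiseMat D + lowerMat D := by
    simp only [raiseMat, lowerMat]
    match_scalars <;> norm_num
  constructor
  · rintro ⟨hAU, hAsU⟩
    refine ⟨fun u hu => ?_, fun u hu => ?_⟩
    · rw [raiseMat, smul_mulVec, sub_mulVec, smul_mulVec]
      exact U.smul_mem _ (U.sub_mem (hAsU u hu) (U.smul_mem _ (hAU u hu)))
    · rw [lowerMat, smul_mulVec, add_mulVec, smul_mulVec]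
      exact U.smul_mem _ (U.add_mem (hAsU u hu) (U.smul_mem _ (hAU u hu)))
  · rintro ⟨hRU, hLU⟩
    refine ⟨fun u hu => ?_, fun u hu => ?_⟩
    · rw [hA, smul_mulVec, sub_mulVec]
      exact U.smul_mem _ (U.sub_mem (hRU u hu) (hLU u hu))
    · rw [hAs, add_mulVec]
      exact U.add_mem (hRU u hu) (hLU u hu)

theorem IsIrredTMod.exists_eq_span_range_eigenvectors {D : ℕ} {W : Submodule ℂ (Vtx D → ℂ)}
    (hW : IsIrredTMod D W) : ∃ (μ : ℂ) (ψ : ℕ → Vtx D → ℂ),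
      (∀ n, imagAdjMat D *ᵥ ψ n = (μ - 2 * n) • ψ n) ∧ W = Submodule.span ℂ (Set.range ψ) := by
  obtain ⟨hTW, hW_ne, hirr⟩ := hW
  obtain ⟨hRW, hLW⟩ := isTMod_iff.mp hTW
  exact Module.End.exists_eq_span_range_eigenvectors (h := toLinAlgEquiv' (imagAdjMat D))
    (by rw [← toLinAlgEquiv'_lie, lie_imagAdjMat_raiseMat, map_smul])
    (by rw [← toLinAlgEquiv'_lie, lie_imagAdjMat_lowerMat, map_smul])
    (by rw [← toLinAlgEquiv'_lie, lie_raiseMat_lowerMat])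
    hW_ne hRW hLW fun U hUW hRU hLU => hirr U (isTMod_iff.mpr ⟨hRU, hLU⟩) hUW

theorem dim_EepsMat_image_le_one_general (D : ℕ)
    (W : Submodule ℂ (Vtx D → ℂ)) (hW : IsIrredTMod D W) (i : ℕ) :
    Module.finrank ℂ (Submodule.map (EepsMat D i).mulVecLin W) ≤ 1 := by
  obtain ⟨μ, ψ, hψ, rfl⟩ := hW.exists_eq_span_range_eigenvectors
  have hEψ (n : ℕ) : (EepsMat D i).mulVecLin (ψ n) = (idemPoly D i).eval (μ - 2 * n) • ψ n := by
    rw [mulVecLin_apply, EepsMat_eq_aeval, aeval_mulVec_of_mulVec_eq_smul (hψ n)]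
  have hθ (n : ℕ) (hn : (EepsMat D i).mulVecLin (ψ n) ≠ 0) : μ - 2 * n = theta D i := by
    obtain ⟨hp, hψ_ne⟩ := smul_ne_zero_iff.mp (hEψ n ▸ hn)
    exact eq_theta_of_eval_idemPoly_ne_zero
      (eval_annPoly_eq_zero_of_mulVec_eq_smul (hψ n) hψ_ne) hp
  rw [Submodule.map_span, ← Set.range_comp]
  refine finrank_span_range_le_one fun m n hm hn => ?_
  have hmn : (m : ℂ) = n := by linear_combination (hθ n hn - hθ m hm) / 2
  exact_mod_cast hmn

/-- For an irreducible `T`-module `W`, `dim(Eᵉ_i W) ≤ 1` for `0 ≤ i ≤ D`. -/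
theorem dim_EepsMat_image_le_one (D : ℕ) (hD : 0 < D)
    (W : Submodule ℂ (Vtx D → ℂ)) (hW : IsIrredTMod D W) (i : ℕ) (hi : i ≤ D) :
    Module.finrank ℂ (Submodule.map (EepsMat D i).mulVecLin W) ≤ 1 :=
  dim_EepsMat_image_le_one_general D W hW i
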